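/- arXiv:2205.06857 — 3 statements merged into one kernel-verified Lean document; each statement's English description precedes it below -/
import Mathlib

section
/- Let (U,F,t) be a Set Cover instance in which every element belongs to at least one set. If the subdivided-star gerrymandering instance constructed from (U,F,t) admits a district-partition into k = t+4 districts that is satisfying for the preferred candidate p, then there exists X ⊆ F with |X| ≤ t and ∪_{S∈X} S = U. -/
attribute [local instance] Classical.propDecidable

/-- Candidate `c` *leads* district `D` (unweighted): `c`'s vote count is at least that of
every candidate. -/
def leadsIn {V C : Type*} (χ : V → C) (c : C) (D : Finset V) : Prop :=
  ∀ c' : C, (D.filter fun x => χ x = c').card ≤ (D.filter fun x => χ x = c).card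

/-- Candidate `c` *wins* district `D` (unweighted): `c`'s vote count strictly exceeds that of
every other candidate. -/
def winsIn {V C : Type*} (χ : V → C) (c : C) (D : Finset V) : Prop :=
  ∀ c' : C, c' ≠ c → (D.filter fun x => χ x = c').card < (D.filter fun x => χ x = c).card

/-- A district-partition of `G` into `k` districts: `k` pairwise-disjoint nonempty vertex sets
covering all vertices, each inducing a connected subgraph. -/
def IsDistrictPartition {V : Type*} (G : SimpleGraph V) (k : ℕ) (P : Finset (Finset V)) : Prop :=
  P.card = k ∧ (∀ D ∈ P, D.Nonempty) ∧
    (∀ D ∈ P, ∀ D' ∈ P, D ≠ D' → Disjoint D D') ∧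
    (∀ x : V, ∃ D ∈ P, x ∈ D) ∧
    (∀ D ∈ P, (G.induce (D : Set V)).Connected)

/-- A district-partition is *satisfying* for the preferred candidate `p` if `p` wins strictly
more districts than any other candidate leads. -/
def SatisfyingFor {V C : Type*} (χ : V → C) (p : C) (P : Finset (Finset V)) : Prop :=
  ∀ q : C, q ≠ p →
    (P.filter fun D => leadsIn χ q D).card < (P.filter fun D => winsIn χ p D).card

/-- Vertices of the subdivided-star gerrymandering instance: the root `r`; branch 1 vertices
`c_1, c_2, u_1, …, u_n`; branch 2 vertices `w_1, …, w_{t-1}`; and, on each of the `t`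
selection branches `s`, the initial vertices `v_0^1, …, v_0^n` (constructor `v0`), the group
vertices `x_i` and `v_i^j` for `i ∈ [m]` (group `g_i`), and the final vertices
`y_0, …, y_m`. -/
inductive VS (n m t : ℕ) : Type where
  | root
  | c1
  | c2
  | u (j : Fin n)
  | w (i : Fin (t - 1))
  | v0 (s : Fin t) (j : Fin n)
  | x (s : Fin t) (i : Fin m)
  | v (s : Fin t) (i : Fin m) (j : Fin n)
  | y (s : Fin t) (i : Fin (m + 1))
  deriving DecidableEq, Fintype

/-- Candidates of the subdivided-star instance: the preferred candidate `p`, the ally `q`,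
element candidates `a_j` for `j ∈ [n]`, and branch candidates `b_s` for `s ∈ [t]`. -/
inductive CS (n t : ℕ) : Type where
  | p
  | q
  | a (j : Fin n)
  | b (s : Fin t)
  deriving DecidableEq

/-- Candidate preferences of the subdivided-star instance. -/
def chiS {n m t : ℕ} : VS n m t → CS n t
  | .root => .q
  | .c1 => .p
  | .c2 => .p
  | .u j => .a j
  | .w _ => .q
  | .v0 _ j => .a j
  | .x _ _ => .q
  | .v _ _ j => .a j
  | .y s _ => .b s

/-- Position of each non-root vertex along its branch, as a pair
(branch index, 0-based distance from the root along the branch minus one); the vertex at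
position 0 of each branch is adjacent to the root.  Branch 0 is `c_1, c_2, u_1, …, u_n`;
branch 1 is `w_1, …, w_{t-1}`; branch `2 + s` is selection branch `s`, ordered as
`v_0^1, …, v_0^n`, then groups `g_1, …, g_m` (group `g_i` consists of the vertices `v_i^j`
with `e_j ∉ S_i` in increasing order of `j`, then `x_i`, then the vertices `v_i^j` with
`e_j ∈ S_i` in increasing order of `j`), then `y_0, …, y_m`. -/
def posS {n m t : ℕ} (S : Fin m → Finset (Fin n)) : VS n m t → Option (ℕ × ℕ)
  | .root => none
  | .c1 => some (0, 0)
  | .c2 => some (0, 1)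
  | .u j => some (0, 2 + (j : ℕ))
  | .w i => some (1, (i : ℕ))
  | .v0 s j => some (2 + (s : ℕ), (j : ℕ))
  | .x s i => some (2 + (s : ℕ), n + (i : ℕ) * (n + 1) + (n - (S i).card))
  | .v s i j => some (2 + (s : ℕ), n + (i : ℕ) * (n + 1) +
      (if j ∈ S i then n - (S i).card + 1 + ((S i).filter fun j' => j' < j).card
       else ((S i)ᶜ.filter fun j' => j' < j).card))
  | .y s i => some (2 + (s : ℕ), n + m * (n + 1) + (i : ℕ))

/-- The subdivided star: the root is adjacent to the vertex at position 0 of each branch, and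
vertices at consecutive positions of the same branch are adjacent. -/
def GS {n m t : ℕ} (S : Fin m → Finset (Fin n)) : SimpleGraph (VS n m t) :=
  SimpleGraph.fromRel (fun a b =>
    (a = VS.root ∧ ∃ br, posS S b = some (br, 0)) ∨
    (∃ br k, posS S a = some (br, k) ∧ posS S b = some (br, k + 1)))

/-!
Only `c₁` and `c₂` vote for `p`, and there are more than two districts, so some district has no
`p`-voter; its leader leads a district, hence `p` wins exactly two districts. Consequently a
district with a non-`p` voter contains no `p`-voter, and every other candidate leads at most one
district.

The district of `u_j` consists of `u`'s only, so it is the one district led by `a_j`. The root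
district `R` is led by `q`, and any other district meeting selection branch `s` lies inside it
and is led by `b_s`. Hence `R` contains every `v_0^j`: otherwise one district would collect all
`m + 1` voters of `a_j` on branch `s`. As `a_j` does not lead `R`, it has fewer votes than `q`
there; the `q`-voters of `R` are the root, at most `t - 1` vertices `w`, and the `x`'s, so some
selection branch `s` carries at most as many `a_j`-voters of `R` as `x`'s. Since `R` is closed
downwards along the branch, if `x_i` is the topmost `x` of branch `s` in `R` and `e_j ∉ S_i`,
then `v_0^j, …, v_i^j` lie below `x_i`, one more `a_j`-voter than `x`'s. So `e_j ∈ S_i`, and the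
topmost indices, one per branch, form a cover of size at most `t`.
-/

open Finset

section Votes

variable {V C : Type*} {χ : V → C} {c c' : C} {D T : Finset V}

noncomputable def votes (χ : V → C) (c : C) (D : Finset V) : ℕ :=
  #(D.filter fun x => χ x = c)

theorem votes_pos_of_mem {x : V} (hx : x ∈ D) : 0 < votes χ (χ x) D :=
  card_pos.2 ⟨x, mem_filter.2 ⟨hx, rfl⟩⟩

theorem exists_mem_of_votes_pos (h : 0 < votes χ c D) : ∃ x ∈ D, χ x = c := by
  obtain ⟨x, hx⟩ := card_pos.1 h
  exact ⟨x, (mem_filter.1 hx).1, (mem_filter.1 hx).2⟩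

theorem votes_le_card_of_subset (h : ∀ x ∈ D, χ x = c → x ∈ T) : votes χ c D ≤ #T :=
  card_le_card fun x hx => h x (mem_filter.1 hx).1 (mem_filter.1 hx).2

theorem votes_le_card_of_injOn {β : Type*} {T : Finset β} (f : V → β)
    (hf : ∀ x ∈ D, χ x = c → f x ∈ T)
    (hinj : ∀ x ∈ D, ∀ x' ∈ D, χ x = c → χ x' = c → f x = f x' → x = x') : votes χ c D ≤ #T :=
  card_le_card_of_injOn f (fun x hx => hf x (mem_filter.1 hx).1 (mem_filter.1 hx).2)
    fun x hx x' hx' => hinj x (mem_filter.1 hx).1 x' (mem_filter.1 hx').1 (mem_filter.1 hx).2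
      (mem_filter.1 hx').2

theorem votes_le_one_of_injOn (h : Set.InjOn χ D) : votes χ c D ≤ 1 :=
  card_le_one.2 fun _ hx _ hx' =>
    h (mem_filter.1 hx).1 (mem_filter.1 hx').1 ((mem_filter.1 hx).2.trans (mem_filter.1 hx').2.symm)

theorem card_le_votes (hT : T ⊆ D) (hc : ∀ x ∈ T, χ x = c) : #T ≤ votes χ c D :=
  card_le_card fun x hx => mem_filter.2 ⟨hT hx, hc x hx⟩

theorem card_add_one_le_votes [DecidableEq V] {ι : Type*} {s : Finset ι} {f : ι → V}
    (hf : Set.InjOn f s) {a : V} (ha : a ∉ s.image f) (hD : insert a (s.image f) ⊆ D)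
    (hc : ∀ x ∈ insert a (s.image f), χ x = c) : #s + 1 ≤ votes χ c D := by
  rw [← card_image_of_injOn hf, ← card_insert_of_notMem ha]
  exact card_le_votes hD hc

theorem exists_leadsIn (hD : D.Nonempty) : ∃ c, leadsIn χ c D := by
  obtain ⟨x, hx, hmax⟩ := D.exists_max_image (fun x => votes χ (χ x) D) hD
  refine ⟨χ x, fun c' => ?_⟩
  rcases Nat.eq_zero_or_pos (votes χ c' D) with h | h
  · exact h.trans_le (Nat.zero_le _)
  · obtain ⟨y, hy, rfl⟩ := exists_mem_of_votes_pos h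
    exact hmax y hy

theorem leadsIn.votes_pos (h : leadsIn χ c D) (hD : D.Nonempty) : 0 < votes χ c D :=
  let ⟨_, hx⟩ := hD
  (votes_pos_of_mem hx).trans_le (h _)

theorem leadsIn.votes_lt_of_not_leadsIn (h : leadsIn χ c D) (h' : ¬ leadsIn χ c' D) :
    votes χ c' D < votes χ c D := by
  obtain ⟨c'', hc''⟩ := not_forall.1 h'
  exact (not_le.1 hc'').trans_le (h c'')

theorem winsIn.votes_pos (h : winsIn χ c D) (hD : D.Nonempty) : 0 < votes χ c D := by
  obtain ⟨x, hx⟩ := hD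
  by_cases hxc : χ x = c
  · exact hxc ▸ votes_pos_of_mem hx
  · exact (h _ hxc).trans_le' (Nat.zero_le _)

theorem winsIn.forall_eq_of_votes_le_one (h : winsIn χ c D) (h1 : votes χ c D ≤ 1) :
    ∀ x ∈ D, χ x = c := by
  intro x hx
  by_contra hxc
  have h₁ := votes_pos_of_mem (χ := χ) hx
  have h₂ : votes χ (χ x) D < votes χ c D := h _ hxc
  omega

theorem sum_votes_biUnion {ι : Type*} [DecidableEq V] {s : Finset ι} {f : ι → Finset V}
    (hs : (s : Set ι).PairwiseDisjoint f) :
    ∑ i ∈ s, votes χ c (f i) = votes χ c (s.biUnion f) := by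
  rw [votes, filter_biUnion, card_biUnion]
  · rfl
  · exact fun i hi j hj hij => (hs hi hj hij).mono (filter_subset _ _) (filter_subset _ _)

theorem votes_eq_add_sum_fiberwise {ι : Type*} [Fintype ι] [DecidableEq ι] (f : V → Option ι) :
    votes χ c D = votes χ c (D.filter (f · = none)) + ∑ i, votes χ c (D.filter (f · = some i)) := by
  rw [votes, card_eq_sum_card_fiberwise (f := f) (t := univ) (fun _ _ => mem_coe.2 (mem_univ _)),
    Fintype.sum_option]
  simp only [votes, filter_filter, and_comm]

end Votes

section Partition

variable {V C : Type*} {G : SimpleGraph V} {k : ℕ} {P : Finset (Finset V)} {χ : V → C} {p : C}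

theorem IsDistrictPartition.eq_of_mem (hP : IsDistrictPartition G k P) {D D' : Finset V}
    (hD : D ∈ P) (hD' : D' ∈ P) {x : V} (hx : x ∈ D) (hx' : x ∈ D') : D = D' := by
  by_contra h
  exact disjoint_left.1 (hP.2.2.1 D hD D' hD' h) hx hx'

theorem IsDistrictPartition.sum_votes [Fintype V] (hP : IsDistrictPartition G k P) (c : C) :
    ∑ D ∈ P, votes χ c D = votes χ c univ := by
  classical
  refine (sum_votes_biUnion (f := id) fun D hD D' hD' h => hP.2.2.1 D hD D' hD' h).trans ?_
  congr 1
  ext x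
  simpa using hP.2.2.2.1 x

variable [Fintype V]

theorem SatisfyingFor.card_winners_eq_two (hP : IsDistrictPartition G k P) (hk : 2 < k)
    (hp : votes χ p univ ≤ 2) (hsat : SatisfyingFor χ p P) :
    #(P.filter fun D => winsIn χ p D) = 2 ∧ ∑ D ∈ P.filter fun D => winsIn χ p D, votes χ p D = 2 ∧
      ∑ D ∈ P, votes χ p D = 2 := by
  set W := P.filter fun D => winsIn χ p D
  have hWP : W ⊆ P := filter_subset _ _
  have hW : #W ≤ ∑ D ∈ W, votes χ p D := by
    rw [card_eq_sum_ones]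
    refine sum_le_sum fun D hD => ?_
    exact (mem_filter.1 hD).2.votes_pos (hP.2.1 D (hWP hD))
  have hWP_sum : ∑ D ∈ W, votes χ p D ≤ ∑ D ∈ P, votes χ p D := sum_le_sum_of_subset hWP
  have hP_sum := hP.sum_votes (χ := χ) p
  obtain ⟨D₀, hD₀, hD₀p⟩ : ∃ D ∈ P, votes χ p D = 0 := by
    by_contra! h
    have : #P ≤ ∑ D ∈ P, votes χ p D :=
      card_eq_sum_ones P ▸ sum_le_sum fun D hD => Nat.one_le_iff_ne_zero.2 (h D hD)
    have := hP.1
    omega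
  obtain ⟨c, hc⟩ := exists_leadsIn (χ := χ) (hP.2.1 D₀ hD₀)
  have hcp : c ≠ p := by
    rintro rfl
    exact (hc.votes_pos (hP.2.1 D₀ hD₀)).ne' hD₀p
  have hlead : 0 < #(P.filter fun D => leadsIn χ c D) := card_pos.2 ⟨D₀, mem_filter.2 ⟨hD₀, hc⟩⟩
  have : _ < #W := hsat c hcp
  omega

theorem SatisfyingFor.leads_subsingleton (hP : IsDistrictPartition G k P) (hk : 2 < k)
    (hp : votes χ p univ ≤ 2) (hsat : SatisfyingFor χ p P) {c : C} (hc : c ≠ p) :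
    {D | D ∈ P ∧ leadsIn χ c D}.Subsingleton := by
  have h := hsat c hc
  rw [(hsat.card_winners_eq_two hP hk hp).1, Nat.lt_succ_iff] at h
  intro D hD D' hD'
  exact card_le_one.1 h D (mem_filter.2 hD) D' (mem_filter.2 hD')

theorem SatisfyingFor.votes_eq_zero (hP : IsDistrictPartition G k P) (hk : 2 < k)
    (hp : votes χ p univ ≤ 2) (hsat : SatisfyingFor χ p P) {D : Finset V} (hD : D ∈ P)
    {x : V} (hx : x ∈ D) (hxp : χ x ≠ p) : votes χ p D = 0 := by
  obtain ⟨hW, hW_sum, hP_sum⟩ := hsat.card_winners_eq_two hP hk hp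
  set W := P.filter fun D => winsIn χ p D
  by_cases hDW : D ∈ W
  · -- Two winning districts share the two `p`-votes, so each has exactly one.
    have hone : ∀ D ∈ W, 1 = votes χ p D := by
      refine (sum_eq_sum_iff_of_le fun D hD => ?_).1 (by simp [hW, hW_sum])
      exact (mem_filter.1 hD).2.votes_pos (hP.2.1 D (mem_filter.1 hD).1)
    exact absurd ((mem_filter.1 hDW).2.forall_eq_of_votes_le_one (hone D hDW).ge x hx) hxp
  · have := sum_sdiff (f := votes χ p) (filter_subset (fun D => winsIn χ p D) P)
    rw [hW_sum, hP_sum, add_eq_right, sum_eq_zero_iff] at this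
    exact this D (mem_sdiff.2 ⟨hD, hDW⟩)

end Partition

theorem card_filter_exists_isGreatest_le {ι α : Type*} [Fintype ι] [Fintype α] [PartialOrder α]
    (A : ι → Set α) : #(univ.filter fun a => ∃ i, IsGreatest (A i) a) ≤ Fintype.card ι :=
  calc #(univ.filter fun a => ∃ i, IsGreatest (A i) a)
      ≤ #(univ.biUnion fun i => univ.filter fun a => IsGreatest (A i) a) :=
        card_le_card fun a ha => by simpa using ha
    _ ≤ ∑ i, #(univ.filter fun a => IsGreatest (A i) a) := card_biUnion_le
    _ ≤ ∑ _i : ι, 1 := sum_le_sum fun i _ =>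
        card_le_one.2 fun _ ha _ hb => (mem_filter.1 ha).2.unique (mem_filter.1 hb).2
    _ = Fintype.card ι := by simp

section Spider

variable {V : Type*}

theorem SimpleGraph.mem_of_forall_adj_mem {G : SimpleGraph V} {D A : Set V}
    (hD : (G.induce D).Connected) (hA : ∀ x ∈ D, ∀ y ∈ D, G.Adj x y → x ∈ A → y ∈ A)
    {a b : V} (ha : a ∈ D) (haA : a ∈ A) (hb : b ∈ D) : b ∈ A := by
  by_contra hbA
  obtain ⟨w⟩ := hD.preconnected ⟨a, ha⟩ ⟨b, hb⟩
  obtain ⟨d, -, hd₁, hd₂⟩ := w.exists_boundary_dart {x | (x : V) ∈ A} haA hbA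
  exact hd₂ (hA _ d.fst.2 _ d.snd.2 d.adj hd₁)

/-- The spider with body `r` and legs read off from `pos`: a vertex `v` with
`pos v = some (br, h)` sits at height `h` on leg `br`. -/
def spider (r : V) (pos : V → Option (ℕ × ℕ)) : SimpleGraph V :=
  SimpleGraph.fromRel fun a b =>
    (a = r ∧ ∃ br, pos b = some (br, 0)) ∨
    (∃ br k, pos a = some (br, k) ∧ pos b = some (br, k + 1))

variable {r : V} {pos : V → Option (ℕ × ℕ)}

theorem spider_adj_of_pos (hr : pos r = none) {x y : V} {br k : ℕ}
    (hx : pos x = some (br, k)) (h : (spider r pos).Adj x y) :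
    (y = r ∧ k = 0) ∨ pos y = some (br, k + 1) ∨ ∃ k', k = k' + 1 ∧ pos y = some (br, k') := by
  rw [spider, SimpleGraph.fromRel_adj] at h
  rcases h.2 with (⟨rfl, -⟩ | ⟨b, l, h₁, h₂⟩) | (⟨rfl, b, hb⟩ | ⟨b, l, h₁, h₂⟩)
  · simp [hr] at hx
  · rw [hx, Option.some.injEq, Prod.mk.injEq] at h₁
    obtain ⟨rfl, rfl⟩ := h₁
    exact Or.inr (Or.inl h₂)
  · rw [hx, Option.some.injEq, Prod.mk.injEq] at hb
    exact Or.inl ⟨rfl, hb.2⟩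
  · rw [hx, Option.some.injEq, Prod.mk.injEq] at h₂
    obtain ⟨rfl, rfl⟩ := h₂
    exact Or.inr (Or.inr ⟨l, rfl, h₁⟩)

theorem spider_onLeg_of_body_notMem (hr : pos r = none) {D : Set V}
    (hD : ((spider r pos).induce D).Connected) (hrD : r ∉ D) {z : V} {br h : ℕ}
    (hz : pos z = some (br, h)) (hzD : z ∈ D) {y : V} (hy : y ∈ D) :
    ∃ h', pos y = some (br, h') := by
  refine SimpleGraph.mem_of_forall_adj_mem (A := {y | ∃ h', pos y = some (br, h')}) hD
    ?_ hzD ⟨h, hz⟩ hy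
  rintro x - y hyD hxy ⟨k, hx⟩
  rcases spider_adj_of_pos hr hx hxy with ⟨rfl, -⟩ | hy | ⟨k', -, hy⟩
  · exact absurd hyD hrD
  · exact ⟨_, hy⟩
  · exact ⟨_, hy⟩

theorem spider_mem_of_body_mem (hr : pos r = none) (hpos : Function.Injective pos) {D : Set V}
    (hD : ((spider r pos).induce D).Connected) (hrD : r ∈ D) {z z' : V} {br h h' : ℕ}
    (hz : pos z = some (br, h)) (hzD : z ∈ D) (hz' : pos z' = some (br, h')) (hlt : h' < h) :
    z' ∈ D := by
  by_contra hz'D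
  have hr_above : r ∈ {y | ∃ k, h' < k ∧ pos y = some (br, k)} := by
    refine SimpleGraph.mem_of_forall_adj_mem hD ?_ hzD ⟨h, hlt, hz⟩ hrD
    rintro x - y hyD hxy ⟨k, hk, hx⟩
    rcases spider_adj_of_pos hr hx hxy with ⟨-, rfl⟩ | hy | ⟨k', rfl, hy⟩
    · omega
    · exact ⟨_, by omega, hy⟩
    · rcases (Nat.lt_succ_iff.1 hk).lt_or_eq with hk' | rfl
      · exact ⟨_, hk', hy⟩
      · exact absurd (hpos (hy.trans hz'.symm) ▸ hyD) hz'D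
  obtain ⟨k, -, hk⟩ := hr_above
  simp [hr] at hk

end Spider

namespace VS

variable {n m t : ℕ} (S : Fin m → Finset (Fin n))

/-- The offset of `v_i^j` within group `g_i`, copied from `posS`. -/
def groupOffset (i : Fin m) (j : Fin n) : ℕ :=
  if j ∈ S i then n - (S i).card + 1 + ((S i).filter fun j' => j' < j).card
  else ((S i)ᶜ.filter fun j' => j' < j).card

theorem posS_v (s : Fin t) (i : Fin m) (j : Fin n) :
    posS S (v s i j) = some (2 + (s : ℕ), n + i * (n + 1) + groupOffset S i j) := rfl

theorem card_filter_lt_strictMonoOn (T : Finset (Fin n)) :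
    StrictMonoOn (fun j => #(T.filter fun j' => j' < j)) T := by
  intro j hj j' _ hjj'
  refine card_lt_card ⟨fun z hz => ?_, fun h => ?_⟩
  · exact mem_filter.2 ⟨(mem_filter.1 hz).1, (mem_filter.1 hz).2.trans hjj'⟩
  · exact lt_irrefl j (mem_filter.1 (h (mem_filter.2 ⟨hj, hjj'⟩))).2

theorem card_filter_lt_lt_card {T : Finset (Fin n)} {j : Fin n} (hj : j ∈ T) :
    #(T.filter fun j' => j' < j) < #T :=
  card_lt_card (filter_ssubset.2 ⟨j, hj, lt_irrefl j⟩)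

variable {S}

theorem groupOffset_lt_of_notMem {i : Fin m} {j : Fin n} (hj : j ∉ S i) :
    groupOffset S i j < n - #(S i) := by
  rw [groupOffset, if_neg hj]
  simpa [card_compl] using card_filter_lt_lt_card (mem_compl.2 hj)

theorem groupOffset_gt_of_mem {i : Fin m} {j : Fin n} (hj : j ∈ S i) :
    n - #(S i) < groupOffset S i j := by
  rw [groupOffset, if_pos hj]
  omega

variable (S)

theorem groupOffset_le (i : Fin m) (j : Fin n) : groupOffset S i j ≤ n := by
  by_cases hj : j ∈ S i
  · have h₁ := card_filter_lt_lt_card hj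
    have h₂ : #(S i) ≤ n := by simpa using card_le_univ (S i)
    rw [groupOffset, if_pos hj]
    omega
  · exact (groupOffset_lt_of_notMem hj).le.trans (Nat.sub_le _ _)

theorem groupOffset_injective (i : Fin m) : Function.Injective (groupOffset S i) := by
  intro j j' h
  by_cases hj : j ∈ S i <;> by_cases hj' : j' ∈ S i
  · simp only [groupOffset, if_pos hj, if_pos hj', Nat.add_left_cancel_iff] at h
    exact (card_filter_lt_strictMonoOn _).injOn hj hj' h
  · exact absurd h (groupOffset_gt_of_mem hj |>.trans' (groupOffset_lt_of_notMem hj')).ne'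
  · exact absurd h (groupOffset_gt_of_mem hj' |>.trans' (groupOffset_lt_of_notMem hj)).ne
  · simp only [groupOffset, if_neg hj, if_neg hj'] at h
    exact (card_filter_lt_strictMonoOn _).injOn (mem_compl.2 hj) (mem_compl.2 hj') h

variable {S}

theorem group_height_lt {i i' c : ℕ} (hc : c ≤ n) (hi : i < i') (c' : ℕ) :
    n + i * (n + 1) + c < n + i' * (n + 1) + c' := by
  nlinarith

theorem group_height_inj {i i' : Fin m} {c c' : ℕ} (hc : c ≤ n) (hc' : c' ≤ n)
    (h : n + i * (n + 1) + c = n + i' * (n + 1) + c') : i = i' ∧ c = c' := by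
  rcases lt_trichotomy i i' with hi | rfl | hi
  · exact absurd h (group_height_lt hc hi c').ne
  · exact ⟨rfl, by omega⟩
  · exact absurd h (group_height_lt hc' hi c).ne'

theorem group_height_lt_y {i : Fin m} {c : ℕ} (hc : c ≤ n) (k : ℕ) :
    n + i * (n + 1) + c < n + m * (n + 1) + k :=
  group_height_lt hc i.isLt k

variable (S) in
theorem posS_injective : Function.Injective (posS S : VS n m t → Option (ℕ × ℕ)) := by
  intro a b h
  cases a <;> cases b <;> (try simp only [posS_v] at h) <;>
    simp only [posS, Option.some.injEq, Prod.mk.injEq, reduceCtorEq, v0.injEq, x.injEq, v.injEq,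
      y.injEq, u.injEq, w.injEq, Fin.ext_iff, false_and, and_false] at h ⊢ <;>
    try omega
  · exact ⟨by omega, congrArg Fin.val (group_height_inj (Nat.sub_le _ _) (Nat.sub_le _ _) h.2).1⟩
  · rename_i i _ _ j
    obtain ⟨rfl, hc⟩ := group_height_inj (Nat.sub_le _ _) (groupOffset_le S _ _) h.2
    by_cases hj : j ∈ S i
    · exact (groupOffset_gt_of_mem hj).ne hc
    · exact (groupOffset_lt_of_notMem hj).ne' hc
  · exact (group_height_lt_y (Nat.sub_le _ _) _).ne h.2
  · rename_i i j _ _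
    obtain ⟨rfl, hc⟩ := group_height_inj (groupOffset_le S _ _) (Nat.sub_le _ _) h.2
    by_cases hj : j ∈ S i
    · exact (groupOffset_gt_of_mem hj).ne' hc
    · exact (groupOffset_lt_of_notMem hj).ne hc
  · obtain ⟨rfl, hc⟩ := group_height_inj (groupOffset_le S _ _) (groupOffset_le S _ _) h.2
    exact ⟨by omega, rfl, congrArg Fin.val (groupOffset_injective S _ hc)⟩
  · exact (group_height_lt_y (groupOffset_le S _ _) _).ne h.2
  · exact (group_height_lt_y (Nat.sub_le _ _) _).ne' h.2
  · exact (group_height_lt_y (groupOffset_le S _ _) _).ne' h.2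

def selBranch : VS n m t → Option (Fin t)
  | v0 s _ => some s
  | x s _ => some s
  | v s _ _ => some s
  | y s _ => some s
  | _ => none

def voterIndex : VS n m t → ℕ
  | v0 _ _ => 0
  | x _ i => i
  | v _ i _ => i + 1
  | y _ i => i
  | _ => 0

variable (S) in
theorem selBranch_eq_some_iff {z : VS n m t} {s : Fin t} :
    selBranch z = some s ↔ ∃ h, posS S z = some (2 + (s : ℕ), h) := by
  cases z <;> simp [selBranch, posS, Fin.ext_iff, eq_comm] <;> omega

theorem eq_c_or_u_of_posS {z : VS n m t} {h : ℕ}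
    (hz : posS S z = some (0, h)) : z = c1 ∨ z = c2 ∨ ∃ j, z = u j := by
  cases z <;> simp_all [posS]

theorem chiS_ne_p_of_selBranch {z : VS n m t} {s : Fin t} (hz : selBranch z = some s) :
    chiS z ≠ CS.p := by
  cases z <;> simp_all [selBranch, chiS]

theorem selBranch_of_chiS_eq_b {z : VS n m t} {s : Fin t} (hz : chiS z = CS.b s) :
    selBranch z = some s := by
  cases z <;> simp_all [selBranch, chiS]

theorem eq_x_of_chiS_eq_q {z : VS n m t} {s : Fin t} (hz : chiS z = CS.q)
    (hs : selBranch z = some s) : ∃ i, z = x s i := by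
  cases z <;> simp_all [selBranch, chiS]

theorem eq_y_of_chiS_eq_b {z : VS n m t} {s : Fin t} (hz : chiS z = CS.b s) :
    ∃ i, z = y s i := by
  cases z <;> simp_all [chiS]

theorem voterIndex_injOn {z z' : VS n m t} {s : Fin t} (hz : selBranch z = some s)
    (hz' : selBranch z' = some s) (hc : chiS z = chiS z') (hi : voterIndex z = voterIndex z') :
    z = z' := by
  cases z <;> cases z' <;> simp_all [selBranch, chiS, voterIndex, Fin.ext_iff]

theorem voterIndex_le {z : VS n m t} {s : Fin t} (hz : selBranch z = some s) :
    voterIndex z ≤ m := by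
  cases z <;> simp_all [selBranch, voterIndex, Fin.is_le]

theorem votes_le_of_selBranch {D : Finset (VS n m t)} {c : CS n t} {s : Fin t}
    (hD : ∀ z ∈ D, chiS z = c → selBranch z = some s) : votes chiS c D ≤ m + 1 :=
  (votes_le_card_of_injOn voterIndex (T := range (m + 1))
    (fun z hz hc => mem_range.2 (Nat.lt_succ_of_le (voterIndex_le (hD z hz hc))))
    fun z hz z' hz' hc hc' h =>
      voterIndex_injOn (hD z hz hc) (hD z' hz' hc') (hc.trans hc'.symm) h).trans
    (card_range _).le

theorem votes_b_le (s : Fin t) (D : Finset (VS n m t)) : votes chiS (CS.b s) D ≤ m + 1 :=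
  votes_le_of_selBranch fun _ _ => selBranch_of_chiS_eq_b

theorem votes_p_univ_le : votes chiS CS.p (univ : Finset (VS n m t)) ≤ 2 :=
  (votes_le_card_of_subset (T := {c1, c2}) fun z _ hz => by cases z <;> simp_all [chiS]).trans
    card_le_two

theorem votes_q_of_selBranch_eq_none_le (ht : 1 ≤ t) (D : Finset (VS n m t)) :
    votes chiS CS.q (D.filter (selBranch · = none)) ≤ t := by
  refine (votes_le_card_of_subset (T := insert root (univ.image w)) fun z hz hq => ?_).trans ?_
  · have hz := (mem_filter.1 hz).2
    cases z <;> simp_all [chiS, selBranch]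
  · refine (card_insert_le _ _).trans ?_
    have := card_image_le (s := (univ : Finset (Fin (t - 1)))) (f := (w : Fin (t - 1) → VS n m t))
    simp only [card_univ, Fintype.card_fin] at this
    omega

theorem mem_of_root_mem {D : Finset (VS n m t)}
    (hD : ((GS S).induce (D : Set (VS n m t))).Connected) (hr : root ∈ D) {z z' : VS n m t}
    {br h h' : ℕ} (hz : posS S z = some (br, h)) (hzD : z ∈ D) (hz' : posS S z' = some (br, h'))
    (hlt : h' < h) : z' ∈ D :=
  spider_mem_of_body_mem rfl (posS_injective S) hD hr hz hzD hz' hlt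

theorem selBranch_eq_of_root_notMem {D : Finset (VS n m t)}
    (hD : ((GS S).induce (D : Set (VS n m t))).Connected) (hr : root ∉ D) {z y : VS n m t}
    {s : Fin t} (hz : z ∈ D) (hs : selBranch z = some s) (hy : y ∈ D) : selBranch y = some s := by
  obtain ⟨h, hzpos⟩ := (selBranch_eq_some_iff S).1 hs
  exact (selBranch_eq_some_iff S).2 (spider_onLeg_of_body_notMem rfl hD hr hzpos hz hy)

theorem forall_eq_u_of_u_mem {D : Finset (VS n m t)}
    (hD : ((GS S).induce (D : Set (VS n m t))).Connected) {j : Fin n} (hu : u j ∈ D)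
    (hp : votes chiS CS.p D = 0) : ∀ z ∈ D, ∃ j', z = u j' := by
  have hc₁ : c1 ∉ D := fun h => (votes_pos_of_mem (χ := chiS) h).ne' hp
  have hc₂ : c2 ∉ D := fun h => (votes_pos_of_mem (χ := chiS) h).ne' hp
  have hr : root ∉ D := fun hr =>
    hc₁ (mem_of_root_mem hD hr (z := u j) rfl hu (z' := c1) rfl (by omega))
  intro z hz
  obtain ⟨h, hzpos⟩ := spider_onLeg_of_body_notMem rfl hD hr (z := u j) rfl hu hz
  rcases eq_c_or_u_of_posS hzpos with rfl | rfl | hzu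
  exacts [absurd hz hc₁, absurd hz hc₂, hzu]

theorem leadsIn_a_of_forall_eq_u {D : Finset (VS n m t)} (hD : ∀ z ∈ D, ∃ j', z = u j')
    {j : Fin n} (hu : u j ∈ D) : leadsIn chiS (CS.a j) D := by
  refine fun c => (votes_le_one_of_injOn fun z hz z' hz' h => ?_).trans
    (votes_pos_of_mem (χ := chiS) hu)
  obtain ⟨j₁, rfl⟩ := hD z hz
  obtain ⟨j₂, rfl⟩ := hD z' hz'
  rw [CS.a.inj h]

variable {k : ℕ} {P : Finset (Finset (VS n m t))}

theorem eq_u_of_leadsIn_a (hP : IsDistrictPartition (GS S) k P) (hk : 2 < k)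
    (hsat : SatisfyingFor chiS CS.p P) {D : Finset (VS n m t)} (hD : D ∈ P) {j : Fin n}
    (hl : leadsIn chiS (CS.a j) D) : ∀ z ∈ D, ∃ j', z = u j' := by
  obtain ⟨Du, hDu, hu⟩ := hP.2.2.2.1 (u j)
  have hDu_u := forall_eq_u_of_u_mem (hP.2.2.2.2 Du hDu) hu
    (hsat.votes_eq_zero hP hk votes_p_univ_le hDu hu (by simp [chiS]))
  obtain rfl : D = Du := hsat.leads_subsingleton hP hk votes_p_univ_le (by simp) ⟨hD, hl⟩
    ⟨hDu, leadsIn_a_of_forall_eq_u hDu_u hu⟩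
  exact hDu_u

theorem leadsIn_q_of_leadsIn_b {D : Finset (VS n m t)}
    (hD : ((GS S).induce (D : Set (VS n m t))).Connected) (hr : root ∈ D) {s : Fin t}
    (hl : leadsIn chiS (CS.b s) D) : leadsIn chiS CS.q D := by
  obtain ⟨z, hz, hzb⟩ := exists_mem_of_votes_pos (hl.votes_pos ⟨_, hr⟩)
  obtain ⟨i, rfl⟩ := eq_y_of_chiS_eq_b hzb
  -- A `b_s`-voter in `D` drags the lower part of branch `s`, with its `m` `q`-voters, into `D`.
  have hx : ∀ i', x s i' ∈ D := fun i' =>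
    mem_of_root_mem hD hr (z := y s i) rfl hz (z' := x s i') rfl
      (group_height_lt_y (Nat.sub_le _ _) _)
  have hq : m + 1 ≤ votes chiS CS.q D := by
    simpa using card_add_one_le_votes (s := univ) (f := x s) (fun _ _ _ _ h => (x.inj h).2)
      (by simp) (insert_subset_iff.2 ⟨hr, image_subset_iff.2 fun i _ => hx i⟩) (by simp [chiS])
  exact fun c => (hl c).trans ((votes_b_le s D).trans hq)

theorem leadsIn_q_root (hP : IsDistrictPartition (GS S) k P) (hk : 2 < k)
    (hsat : SatisfyingFor chiS CS.p P) {Dr : Finset (VS n m t)} (hDr : Dr ∈ P) (hr : root ∈ Dr) :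
    leadsIn chiS CS.q Dr := by
  obtain ⟨c, hc⟩ := exists_leadsIn (χ := chiS) ⟨_, hr⟩
  cases c with
  | p =>
    have := hc.votes_pos ⟨_, hr⟩
    rw [hsat.votes_eq_zero hP hk votes_p_univ_le hDr hr (by simp [chiS])] at this
    exact absurd this (lt_irrefl 0)
  | q => exact hc
  | a j => simpa using eq_u_of_leadsIn_a hP hk hsat hDr hc root hr
  | b s => exact leadsIn_q_of_leadsIn_b (hP.2.2.2.2 Dr hDr) hr hc

theorem leadsIn_b_of_selBranch (hP : IsDistrictPartition (GS S) k P) (hk : 2 < k)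
    (hsat : SatisfyingFor chiS CS.p P) {Dr : Finset (VS n m t)} (hDr : Dr ∈ P) (hr : root ∈ Dr)
    {B : Finset (VS n m t)} (hB : B ∈ P) (hrB : root ∉ B) {z : VS n m t} (hz : z ∈ B) {s : Fin t}
    (hs : selBranch z = some s) : (∀ y ∈ B, selBranch y = some s) ∧ leadsIn chiS (CS.b s) B := by
  have hBs := fun y => selBranch_eq_of_root_notMem (hP.2.2.2.2 B hB) hrB hz hs (y := y)
  refine ⟨hBs, ?_⟩
  obtain ⟨c, hc⟩ := exists_leadsIn (χ := chiS) ⟨z, hz⟩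
  obtain ⟨y, hy, hyc⟩ := exists_mem_of_votes_pos (hc.votes_pos ⟨z, hz⟩)
  cases c with
  | p => exact absurd hyc (chiS_ne_p_of_selBranch (hBs y hy))
  | q =>
    obtain rfl := hsat.leads_subsingleton hP hk votes_p_univ_le (by simp) ⟨hB, hc⟩
      ⟨hDr, leadsIn_q_root hP hk hsat hDr hr⟩
    exact absurd hr hrB
  | a j =>
    obtain ⟨j', rfl⟩ := eq_u_of_leadsIn_a hP hk hsat hB hc z hz
    simp [selBranch] at hs
  | b s' =>
    obtain rfl : s' = s := Option.some.inj ((selBranch_of_chiS_eq_b hyc).symm.trans (hBs y hy))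
    exact hc

theorem v0_mem_root (hP : IsDistrictPartition (GS S) k P) (hk : 2 < k)
    (hsat : SatisfyingFor chiS CS.p P) {Dr : Finset (VS n m t)} (hDr : Dr ∈ P) (hr : root ∈ Dr)
    (s : Fin t) (j : Fin n) : v0 s j ∈ Dr := by
  by_contra hv0
  have root_notMem : ∀ {B z}, B ∈ P → z ∈ B → z ∉ Dr → root ∉ B := fun hB hz hzDr hrB =>
    hzDr (hP.eq_of_mem hB hDr hrB hr ▸ hz)
  obtain ⟨B, hB, hv0B⟩ := hP.2.2.2.1 (v0 s j)
  obtain ⟨hBs, hBb⟩ :=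
    leadsIn_b_of_selBranch hP hk hsat hDr hr hB (root_notMem hB hv0B hv0) hv0B rfl
  -- Otherwise `B` would collect all `m + 1` voters of `a_j` on branch `s`, so `a_j` would lead it.
  have hv : ∀ i, v s i j ∈ B := fun i => by
    have hvDr : v s i j ∉ Dr := fun h =>
      hv0 (mem_of_root_mem (hP.2.2.2.2 Dr hDr) hr (posS_v S s i j) h (z' := v0 s j) rfl
        (by have := j.isLt; omega))
    obtain ⟨B', hB', hvB'⟩ := hP.2.2.2.1 (v s i j)
    have hB'b :=
      (leadsIn_b_of_selBranch hP hk hsat hDr hr hB' (root_notMem hB' hvB' hvDr) hvB' rfl).2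
    rwa [hsat.leads_subsingleton hP hk votes_p_univ_le (by simp) ⟨hB, hBb⟩ ⟨hB', hB'b⟩]
  have ha : m + 1 ≤ votes chiS (CS.a j) B := by
    simpa using card_add_one_le_votes (s := univ) (f := (v s · j))
      (fun _ _ _ _ h => (v.inj h).2.1) (by simp)
      (insert_subset_iff.2 ⟨hv0B, image_subset_iff.2 fun i _ => hv i⟩) (by simp [chiS])
  have hl : leadsIn chiS (CS.a j) B := fun c =>
    (votes_le_of_selBranch fun z hz _ => hBs z hz).trans ha
  simpa using eq_u_of_leadsIn_a hP hk hsat hB hl _ hv0B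

theorem exists_selBranch_votes_a_le_votes_q (ht : 1 ≤ t) {D : Finset (VS n m t)} {j : Fin n}
    (hlt : votes chiS (CS.a j) D < votes chiS CS.q D) :
    ∃ s, votes chiS (CS.a j) (D.filter (selBranch · = some s)) ≤
      votes chiS CS.q (D.filter (selBranch · = some s)) := by
  rw [votes_eq_add_sum_fiberwise selBranch, votes_eq_add_sum_fiberwise (c := CS.q) selBranch]
    at hlt
  have h₀ := votes_q_of_selBranch_eq_none_le ht D
  have : ∑ s, votes chiS (CS.a j) (D.filter (selBranch · = some s)) <
      ∑ s, (votes chiS CS.q (D.filter (selBranch · = some s)) + 1) := by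
    rw [sum_add_distrib, sum_const, card_univ, Fintype.card_fin, smul_eq_mul, mul_one]
    omega
  obtain ⟨s, -, hs⟩ := exists_lt_of_sum_lt this
  exact ⟨s, Nat.lt_succ_iff.1 hs⟩

theorem votes_q_lt_votes_a_of_isGreatest {D : Finset (VS n m t)}
    (hD : ((GS S).induce (D : Set (VS n m t))).Connected) (hr : root ∈ D) {s : Fin t}
    {i₀ : Fin m} (htop : IsGreatest {i | x s i ∈ D} i₀) {j : Fin n} (hj : j ∉ S i₀) :
    votes chiS CS.q (D.filter (selBranch · = some s)) <
      votes chiS (CS.a j) (D.filter (selBranch · = some s)) := by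
  have hq : votes chiS CS.q (D.filter (selBranch · = some s)) ≤ i₀ + 1 := by
    refine (votes_le_card_of_subset (T := (Iic i₀).image (x s)) fun z hz hzq => ?_).trans
      (card_image_le.trans (Fin.card_Iic i₀).le)
    obtain ⟨hzD, hzs⟩ := mem_filter.1 hz
    obtain ⟨i, rfl⟩ := eq_x_of_chiS_eq_q hzq hzs
    exact mem_image.2 ⟨i, mem_Iic.2 (htop.2 hzD), rfl⟩
  -- `v_0^j, …, v_{i₀}^j` lie below `x_{i₀}`: one more `a_j`-voter than the `x`'s up to `x_{i₀}`.
  have hv0 : v0 s j ∈ D :=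
    mem_of_root_mem hD hr (z := x s i₀) rfl htop.1 (z' := v0 s j) rfl (by have := j.isLt; omega)
  have hv : ∀ i ≤ i₀, v s i j ∈ D := fun i hi => by
    refine mem_of_root_mem hD hr (z := x s i₀) rfl htop.1 (posS_v S s i j) ?_
    rcases hi.lt_or_eq with hi | rfl
    · exact group_height_lt (groupOffset_le S _ _) hi _
    · have := groupOffset_lt_of_notMem hj
      omega
  have ha : (i₀ : ℕ) + 1 < votes chiS (CS.a j) (D.filter (selBranch · = some s)) := by
    simpa using card_add_one_le_votes (D := D.filter (selBranch · = some s)) (s := Iic i₀)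
      (f := (v s · j)) (fun _ _ _ _ h => (v.inj h).2.1) (by simp)
      (insert_subset_iff.2 ⟨mem_filter.2 ⟨hv0, rfl⟩,
        image_subset_iff.2 fun i hi => mem_filter.2 ⟨hv i (mem_Iic.1 hi), rfl⟩⟩)
      (by simp [chiS])
  omega

theorem exists_isGreatest_and_mem (ht : 1 ≤ t) (hP : IsDistrictPartition (GS S) k P)
    (hk : 2 < k) (hsat : SatisfyingFor chiS CS.p P) {Dr : Finset (VS n m t)} (hDr : Dr ∈ P)
    (hr : root ∈ Dr) (j : Fin n) : ∃ s i, IsGreatest {i | x s i ∈ Dr} i ∧ j ∈ S i := by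
  have hlt : votes chiS (CS.a j) Dr < votes chiS CS.q Dr :=
    (leadsIn_q_root hP hk hsat hDr hr).votes_lt_of_not_leadsIn fun h => by
      simpa using eq_u_of_leadsIn_a hP hk hsat hDr h root hr
  obtain ⟨s, hs⟩ := exists_selBranch_votes_a_le_votes_q ht hlt
  have hv0 : v0 s j ∈ Dr.filter (selBranch · = some s) :=
    mem_filter.2 ⟨v0_mem_root hP hk hsat hDr hr s j, rfl⟩
  have hpos := (votes_pos_of_mem (χ := chiS) hv0).trans_le hs
  obtain ⟨z, hz, hzq⟩ := exists_mem_of_votes_pos hpos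
  obtain ⟨i, rfl⟩ := eq_x_of_chiS_eq_q hzq (mem_filter.1 hz).2
  obtain ⟨i₀, hi₀, hmax⟩ := (univ.filter fun i => x s i ∈ Dr).exists_max_image id
    ⟨i, mem_filter.2 ⟨mem_univ _, (mem_filter.1 hz).1⟩⟩
  have htop : IsGreatest {i | x s i ∈ Dr} i₀ :=
    ⟨(mem_filter.1 hi₀).2, fun i hi => hmax i (mem_filter.2 ⟨mem_univ _, hi⟩)⟩
  refine ⟨s, i₀, htop, ?_⟩
  by_contra hj
  exact (votes_q_lt_votes_a_of_isGreatest (hP.2.2.2.2 Dr hDr) hr htop hj).not_ge hs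

end VS

theorem star_gerrymander_imp_cover_general (n m t : ℕ) (ht : 1 ≤ t)
    (S : Fin m → Finset (Fin n))
    (hgerry : ∃ P : Finset (Finset (VS n m t)),
      IsDistrictPartition (GS S) (t + 4) P ∧ SatisfyingFor chiS CS.p P) :
    ∃ X : Finset (Fin m), X.card ≤ t ∧ ∀ j : Fin n, ∃ i ∈ X, j ∈ S i := by
  obtain ⟨P, hP, hsat⟩ := hgerry
  obtain ⟨Dr, hDr, hr⟩ := hP.2.2.2.1 VS.root
  refine ⟨univ.filter fun i => ∃ s, IsGreatest {i | VS.x s i ∈ Dr} i, ?_, fun j => ?_⟩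
  · convert card_filter_exists_isGreatest_le fun s : Fin t => {i | VS.x s i ∈ Dr}
    exact (Fintype.card_fin t).symm
  · obtain ⟨s, i, hi, hj⟩ := VS.exists_isGreatest_and_mem ht hP (by omega) hsat hDr hr j
    exact ⟨i, mem_filter.2 ⟨mem_univ _, s, hi⟩, hj⟩

/-- backward direction of Theorem 2.  Let `(U, F, t)` be a Set Cover
instance in which every element belongs to at least one set.  If the subdivided-star
gerrymandering instance constructed from `(U, F, t)` admits a district-partition into
`k = t + 4` districts that is satisfying for the preferred candidate `p`, then there exists
`X ⊆ F` with `|X| ≤ t` and `∪_{S ∈ X} S = U`. -/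
theorem star_gerrymander_imp_cover (n m t : ℕ) (ht : 1 ≤ t) (htm : t ≤ m)
    (S : Fin m → Finset (Fin n))
    (hcov : ∀ j : Fin n, ∃ i : Fin m, j ∈ S i)
    (hgerry : ∃ P : Finset (Finset (VS n m t)),
      IsDistrictPartition (GS S) (t + 4) P ∧ SatisfyingFor chiS CS.p P) :
    ∃ X : Finset (Fin m), X.card ≤ t ∧ ∀ j : Fin n, ∃ i ∈ X, j ∈ S i :=
  star_gerrymander_imp_cover_general n m t ht S hgerry
end

section
/- Let (G, C, w, p, k) be a Weighted Gerrymandering instance where G is a finite tree, let b be a branch vertex of G, and let S = v_1,…,v_s be a segment of G with v_1 = b. For i ∈ [s], let G'_i be the graph obtained from G by deleting the edge v_i v_{i+1} when i < s and contracting v_1,…,v_i into the single vertex b, with weight vector w'(b) = ∑_{j=1}^{i} w(v_j) and all other weights unchanged. Then G admits a district-partition into k districts that is satisfying for p if and only if there exists i ∈ [s] such that G'_i admits a district-partition into k districts that is satisfying for p. -/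
attribute [local instance] Classical.propDecidable

/-- Candidate `c`'s vote count in district `D`, for weight vectors `w`. -/
def votesW {V C : Type*} (w : V → C → ℕ) (c : C) (D : Finset V) : ℕ := ∑ x ∈ D, w x c

/-- Candidate `c` *leads* district `D`: `c`'s vote count is at least that of every
candidate. -/
def leadsW {V C : Type*} (w : V → C → ℕ) (c : C) (D : Finset V) : Prop :=
  ∀ c' : C, votesW w c' D ≤ votesW w c D

/-- Candidate `c` *wins* district `D`: `c`'s vote count strictly exceeds that of every other
candidate. -/
def winsW {V C : Type*} (w : V → C → ℕ) (c : C) (D : Finset V) : Prop :=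
  ∀ c' : C, c' ≠ c → votesW w c' D < votesW w c D

/-- A district-partition is *satisfying* for the preferred candidate `p` if `p` wins strictly
more districts than any other candidate leads. -/
def SatisfyingW {V C : Type*} (w : V → C → ℕ) (p : C) (P : Finset (Finset V)) : Prop :=
  ∀ q : C, q ≠ p →
    (P.filter fun D => leadsW w q D).card < (P.filter fun D => winsW w p D).card

/-- Vertex set obtained from `V` by contracting the prefix `v_0, …, v_i` of the segment `v`
into its first vertex `b = v_0`: we keep `b` and delete the other contracted vertices. -/
abbrev ContractedVerts {V : Type*} (b : V) {s : ℕ} (v : Fin s → V) (i : Fin s) : Type _ :=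
  {x : V // x = b ∨ ∀ j : Fin s, j ≤ i → x ≠ v j}

/-- The graph `G'_i` obtained from `G` by deleting the edge `v_i v_{i+1}` (when `v_{i+1}`
exists) and contracting the prefix `v_0, …, v_i` of the segment into the single vertex `b`:
two surviving vertices other than `b` are adjacent iff they were adjacent in `G`, and `b` is
adjacent to a surviving vertex `y` iff some contracted vertex `v_j` (with `j ≤ i`) is adjacent
to `y` in `G`, except via the deleted edge `v_i v_{i+1}`. -/
def contractGraph {V : Type*} (G : SimpleGraph V) (b : V) {s : ℕ} (v : Fin s → V) (i : Fin s) :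
    SimpleGraph (ContractedVerts b v i) :=
  SimpleGraph.fromRel (fun x y =>
    ((x : V) ≠ b ∧ (y : V) ≠ b ∧ G.Adj (x : V) (y : V)) ∨
    ((x : V) = b ∧ ∃ j : Fin s, j ≤ i ∧ G.Adj (v j) (y : V) ∧
      ¬(j = i ∧ ∃ h : (i : ℕ) + 1 < s, (y : V) = v ⟨(i : ℕ) + 1, h⟩)))

/-- The weight function of the contracted instance: the contracted vertex `b` carries the sum
of the weight vectors of `v_0, …, v_i`, and every other vertex keeps its weight vector. -/
noncomputable def contractWeight {V C : Type*} (w : V → C → ℕ) (b : V) {s : ℕ} (v : Fin s → V) (i : Fin s) :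
    ContractedVerts b v i → C → ℕ :=
  fun x c =>
    if (x : V) = b then ∑ j ∈ Finset.univ.filter (fun j : Fin s => j ≤ i), w (v j) c
    else w (x : V) c

/-!
Contracting the prefix `v_0, …, v_i` of the segment is the quotient map `contractMap`, which
sends the prefix to `b` and fixes every other vertex, and `contractWeight` is the push-forward of
`w` along it. Given a satisfying partition of `G`, choose `i` maximal such that `v_0, …, v_i` all
lie in the district of `b`. Then every district contains or avoids the whole prefix, and the
deleted edge `v_i v_{i+1}` joins two different districts, so the images of the districts
partition `G'_i` into connected districts with the same vote counts. Conversely, the preimages of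
the districts of `G'_i` partition `G`; they are connected because the prefix is a path. Since vote
counts are preserved district by district, so are winners and leaders.
-/

namespace SimpleGraph

variable {V W : Type*} {G : SimpleGraph V} {H : SimpleGraph W}

theorem reachable_induce_of_coe_eq {S : Set V} {x y : S} (h : (x : V) = y) :
    (G.induce S).Reachable x y :=
  Subtype.ext h ▸ Reachable.refl x

theorem Reachable.of_map_adj (f : V → W)
    (hf : ∀ ⦃x y⦄, G.Adj x y → H.Reachable (f x) (f y)) {x y : V} (h : G.Reachable x y) :
    H.Reachable (f x) (f y) := by
  rw [reachable_iff_reflTransGen] at h ⊢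
  exact h.lift' f fun _ _ hxy => (reachable_iff_reflTransGen _ _).mp (hf hxy)

theorem Connected.of_map_adj (hG : G.Connected) (f : V → W)
    (hf : ∀ ⦃x y⦄, G.Adj x y → H.Reachable (f x) (f y))
    (hdense : ∀ y, ∃ x, H.Reachable y (f x)) : H.Connected := by
  have : Nonempty W := ⟨f hG.nonempty.some⟩
  refine (connected_iff H).mpr ⟨fun y y' => ?_, this⟩
  obtain ⟨x, hx⟩ := hdense y
  obtain ⟨x', hx'⟩ := hdense y'
  exact hx.trans (((hG x x').of_map_adj f hf).trans hx'.symm)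

end SimpleGraph

section DistrictPartition

open Finset

variable {α β C : Type*} [DecidableEq β]

theorem IsDistrictPartition.image {G : SimpleGraph α} {H : SimpleGraph β} {k : ℕ}
    {P : Finset (Finset α)} (hP : IsDistrictPartition G k P) (f : Finset α → Finset β)
    (hne : ∀ D ∈ P, (f D).Nonempty)
    (hdisj : ∀ D ∈ P, ∀ D' ∈ P, Disjoint D D' → Disjoint (f D) (f D'))
    (hcover : ∀ y, ∃ D ∈ P, y ∈ f D)
    (hconn : ∀ D ∈ P, (H.induce (f D : Set β)).Connected) :
    Set.InjOn f P ∧ IsDistrictPartition H k (P.image f) := by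
  obtain ⟨hcard, -, hPdisj, -, -⟩ := hP
  have hinj : Set.InjOn f P := by
    intro D hD D' hD' hDD'
    by_contra hne'
    obtain ⟨y, hy⟩ := hne D hD
    exact disjoint_left.mp (hdisj D hD D' hD' (hPdisj D hD D' hD' hne')) hy (hDD' ▸ hy)
  refine ⟨hinj, by rwa [card_image_of_injOn hinj], ?_, ?_, ?_, ?_⟩
  · simpa using hne
  · simp only [mem_image]
    rintro _ ⟨D, hD, rfl⟩ _ ⟨D', hD', rfl⟩ hne'
    exact hdisj D hD D' hD' (hPdisj D hD D' hD' fun h => hne' (h ▸ rfl))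
  · simpa using hcover
  · simpa using hconn

theorem SatisfyingW.image {w₁ : α → C → ℕ} {w₂ : β → C → ℕ} {p : C} {P : Finset (Finset α)}
    (hP : SatisfyingW w₁ p P) (f : Finset α → Finset β) (hf : Set.InjOn f P)
    (hvotes : ∀ D ∈ P, ∀ c, votesW w₂ c (f D) = votesW w₁ c D) :
    SatisfyingW w₂ p (P.image f) := by
  intro q hq
  have hlead : ∀ D ∈ P, leadsW w₂ q (f D) ↔ leadsW w₁ q D := fun D hD => by
    simp only [leadsW, hvotes D hD]
  have hwins : ∀ D ∈ P, winsW w₂ p (f D) ↔ winsW w₁ p D := fun D hD => by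
    simp only [winsW, hvotes D hD]
  have hinj (r : Finset α → Prop) : Set.InjOn f (P.filter r) :=
    hf.mono (coe_subset.mpr (filter_subset r P))
  rw [filter_image, filter_image, filter_congr hlead, filter_congr hwins,
    card_image_of_injOn (hinj _), card_image_of_injOn (hinj _)]
  exact hP q hq

variable {f : α → β}

theorem IsDistrictPartition.image_image {G : SimpleGraph α} {H : SimpleGraph β} {k : ℕ}
    {P : Finset (Finset α)} (hP : IsDistrictPartition G k P) (hf : Function.Surjective f)
    (hsat : ∀ D ∈ P, f ⁻¹' (f '' D) ⊆ D)
    (hconn : ∀ D ∈ P, (H.induce (D.image f : Set β)).Connected) :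
    Set.InjOn (Finset.image f) P ∧ IsDistrictPartition H k (P.image (Finset.image f)) := by
  refine hP.image _ (fun D hD => (hP.2.1 D hD).image f) (fun D hD D' hD' hDD' => ?_)
    (fun y => ?_) hconn
  · simp only [disjoint_left, mem_image, not_exists, not_and]
    rintro _ ⟨x, hx, rfl⟩ x' hx' hxx'
    exact disjoint_left.mp hDD' hx (hsat D' hD' ⟨x', hx', hxx'⟩)
  · obtain ⟨x, rfl⟩ := hf y
    obtain ⟨D, hD, hx⟩ := hP.2.2.2.1 x
    exact ⟨D, hD, mem_image_of_mem f hx⟩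

variable [Fintype α]

theorem IsDistrictPartition.image_preimage {G : SimpleGraph β} {H : SimpleGraph α} {k : ℕ}
    {P : Finset (Finset β)} (hP : IsDistrictPartition G k P) (hf : Function.Surjective f)
    (hconn : ∀ D ∈ P, (H.induce {x | f x ∈ D}).Connected) :
    Set.InjOn (fun D : Finset β => Finset.univ.filter (f · ∈ D)) P ∧
      IsDistrictPartition H k (P.image fun D => Finset.univ.filter (f · ∈ D)) := by
  refine hP.image _ (fun D hD => ?_) (fun D _ D' _ hDD' => ?_) (fun x => ?_)
    (fun D hD => by convert hconn D hD <;> simp)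
  · obtain ⟨y, hy⟩ := hP.2.1 D hD
    obtain ⟨x, rfl⟩ := hf y
    exact ⟨x, by simpa using hy⟩
  · exact disjoint_filter_filter' _ _ fun _ hD hD' x hx =>
      disjoint_left.mp hDD' (hD x hx) (hD' x hx)
  · obtain ⟨D, hD, hx⟩ := hP.2.2.2.1 (f x)
    exact ⟨D, hD, by simpa using hx⟩

theorem votesW_preimage {w : α → C → ℕ} {w' : β → C → ℕ}
    (hw : ∀ y c, w' y c = ∑ x with f x = y, w x c) (D : Finset β) (c : C) :
    votesW w c (univ.filter (f · ∈ D)) = votesW w' c D := by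
  unfold votesW
  rw [← sum_fiberwise_of_maps_to (g := f) (t := D) (by simp)]
  refine sum_congr rfl fun y hy => ?_
  rw [hw, filter_filter]
  exact sum_congr (filter_congr fun x _ => ⟨fun h => h.2, fun h => ⟨h ▸ hy, h⟩⟩) fun _ _ => rfl

theorem filter_mem_image_eq_of_saturated {D : Finset α} (hsat : f ⁻¹' (f '' D) ⊆ D) :
    univ.filter (f · ∈ D.image f) = D := by
  ext x
  simp only [mem_filter, mem_univ, true_and, mem_image]
  exact ⟨fun ⟨x', hx', hxx'⟩ => hsat ⟨x', hx', hxx'⟩, fun hx => ⟨x, hx, rfl⟩⟩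

theorem votesW_image_of_saturated {w : α → C → ℕ} {w' : β → C → ℕ}
    (hw : ∀ y c, w' y c = ∑ x with f x = y, w x c) {D : Finset α}
    (hsat : f ⁻¹' (f '' D) ⊆ D) (c : C) :
    votesW w' c (D.image f) = votesW w c D := by
  conv_rhs => rw [← filter_mem_image_eq_of_saturated hsat]
  exact (votesW_preimage hw _ c).symm

end DistrictPartition

section Contraction

open Finset

variable {V : Type*} {G : SimpleGraph V} {b : V} {s : ℕ} {v : Fin s → V} {i : Fin s}

def contractBase (b : V) (v : Fin s → V) (i : Fin s) : ContractedVerts b v i :=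
  ⟨b, Or.inl rfl⟩

noncomputable def contractMap (b : V) (v : Fin s → V) (i : Fin s) (x : V) :
    ContractedVerts b v i :=
  if h : x ∈ v '' Set.Iic i then contractBase b v i
  else ⟨x, Or.inr fun j hj hxj => h ⟨j, hj, hxj.symm⟩⟩

theorem contractMap_of_mem {x : V} (h : x ∈ v '' Set.Iic i) :
    contractMap b v i x = contractBase b v i :=
  dif_pos h

theorem coe_contractMap_of_notMem {x : V} (h : x ∉ v '' Set.Iic i) :
    (contractMap b v i x : V) = x := by
  simp [contractMap, h]

theorem contractMap_coe (y : ContractedVerts b v i) : contractMap b v i y = y := by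
  by_cases hy : (y : V) ∈ v '' Set.Iic i
  · obtain ⟨j, hj, hjy⟩ := hy
    rw [contractMap_of_mem ⟨j, hj, hjy⟩]
    exact Subtype.ext (y.2.resolve_right fun h => h j hj hjy.symm).symm
  · exact Subtype.ext (coe_contractMap_of_notMem hy)

theorem contractMap_surjective : Function.Surjective (contractMap b v i) :=
  fun y => ⟨y, contractMap_coe y⟩

theorem contractMap_eq_contractBase_iff (hb : b ∈ v '' Set.Iic i) {x : V} :
    contractMap b v i x = contractBase b v i ↔ x ∈ v '' Set.Iic i := by
  refine ⟨fun h => ?_, contractMap_of_mem⟩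
  by_contra hx
  have hxb : (contractMap b v i x : V) = x := coe_contractMap_of_notMem hx
  rw [h] at hxb
  exact hx (hxb ▸ hb)

theorem contractMap_eq_contractMap_iff (hb : b ∈ v '' Set.Iic i) {x x' : V} :
    contractMap b v i x' = contractMap b v i x ↔
      x' = x ∨ x' ∈ v '' Set.Iic i ∧ x ∈ v '' Set.Iic i := by
  refine ⟨fun h => ?_, ?_⟩
  · by_cases hx : x ∈ v '' Set.Iic i
    · rw [contractMap_of_mem hx, contractMap_eq_contractBase_iff hb] at h
      exact Or.inr ⟨h, hx⟩
    · have hx' : x' ∉ v '' Set.Iic i := fun hx' => hx <|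
        (contractMap_eq_contractBase_iff hb).mp (h ▸ contractMap_of_mem hx')
      left
      rw [← coe_contractMap_of_notMem hx, ← coe_contractMap_of_notMem hx', h]
  · rintro (rfl | ⟨hx', hx⟩)
    · rfl
    · rw [contractMap_of_mem hx, contractMap_of_mem hx']

theorem contractWeight_eq_sum_fiber [Fintype V] {C : Type*} (hb : b ∈ v '' Set.Iic i)
    (hinj : Function.Injective v) (w : V → C → ℕ) (y : ContractedVerts b v i) (c : C) :
    contractWeight w b v i y c = ∑ x with contractMap b v i x = y, w x c := by
  by_cases hy : y = contractBase b v i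
  · subst hy
    have hfiber : univ.filter (contractMap b v i · = contractBase b v i) =
        (univ.filter (· ≤ i)).image v := by
      ext x
      simp [contractMap_eq_contractBase_iff hb]
    rw [hfiber, sum_image hinj.injOn]
    simp [contractWeight, contractBase]
  · have hyb : (y : V) ≠ b := fun h => hy (Subtype.ext h)
    have hfiber : univ.filter (contractMap b v i · = y) = {(y : V)} := by
      ext x
      simp only [mem_filter, mem_univ, true_and, mem_singleton]
      refine ⟨fun h => ?_, fun h => h ▸ contractMap_coe y⟩
      rw [← contractMap_coe y, contractMap_eq_contractMap_iff hb] at h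
      refine h.resolve_right fun ⟨_, hy'⟩ => hy ?_
      rw [← contractMap_coe y, contractMap_of_mem hy']
    simp [hfiber, contractWeight, hyb]

theorem preimage_image_contractMap_subset (hb : b ∈ v '' Set.Iic i) {D : Set V}
    (hD : v '' Set.Iic i ⊆ D ∨ Disjoint (v '' Set.Iic i) D) :
    contractMap b v i ⁻¹' (contractMap b v i '' D) ⊆ D := by
  rintro x' ⟨x, hx, h⟩
  rcases (contractMap_eq_contractMap_iff hb).mp h.symm with rfl | ⟨hx', hxi⟩
  · exact hx
  · rcases hD with hsub | hdisj
    · exact hsub hx'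
    · exact absurd hx (Set.disjoint_left.mp hdisj hxi)

theorem exists_prefix_subset_and_succ_notMem {D : Set V} (h0 : 0 < s) (hD : v ⟨0, h0⟩ ∈ D) :
    ∃ i : Fin s, v '' Set.Iic i ⊆ D ∧ ∀ h : (i : ℕ) + 1 < s, v ⟨i + 1, h⟩ ∉ D := by
  obtain ⟨i, hi, hmax⟩ := exists_max_image
    (univ.filter fun i : Fin s => v '' Set.Iic i ⊆ D) id
    ⟨⟨0, h0⟩, mem_filter.mpr ⟨mem_univ _, by
      rintro _ ⟨j, hj, rfl⟩
      rwa [show j = ⟨0, h0⟩ from Fin.ext (Nat.le_zero.mp hj)]⟩⟩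
  refine ⟨i, (mem_filter.mp hi).2, fun h hnext => ?_⟩
  have hsucc : v '' Set.Iic ⟨i + 1, h⟩ ⊆ D := by
    rintro _ ⟨j, hj, rfl⟩
    rcases Nat.lt_or_eq_of_le (Fin.le_def.mp hj) with hlt | heq
    · exact (mem_filter.mp hi).2 ⟨j, Fin.le_def.mpr (Nat.le_of_lt_succ hlt), rfl⟩
    · exact Fin.ext heq ▸ hnext
  exact absurd (hmax ⟨i + 1, h⟩ (by simpa using hsucc)) (by simp [Fin.le_def])

theorem contractGraph_adj_contractBase (hb : b ∈ v '' Set.Iic i) {c : V}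
    (hc : c ∉ v '' Set.Iic i) {j : Fin s} (hj : j ≤ i) (hadj : G.Adj (v j) c)
    (hcut : ∀ h : (i : ℕ) + 1 < s, s(v j, c) ≠ s(v i, v ⟨i + 1, h⟩)) :
    (contractGraph G b v i).Adj (contractBase b v i) (contractMap b v i c) := by
  rw [contractGraph, SimpleGraph.fromRel_adj, coe_contractMap_of_notMem hc]
  refine ⟨fun h => hc ?_, Or.inl (Or.inr ⟨rfl, j, hj, hadj, ?_⟩)⟩
  · rw [← coe_contractMap_of_notMem hc, ← h]
    exact hb
  · rintro ⟨rfl, h, rfl⟩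
    exact hcut h rfl

theorem contractGraph_adj_contractMap (hb : b ∈ v '' Set.Iic i) {a c : V} (hac : G.Adj a c)
    (hne : contractMap b v i a ≠ contractMap b v i c)
    (hcut : ∀ h : (i : ℕ) + 1 < s, s(a, c) ≠ s(v i, v ⟨i + 1, h⟩)) :
    (contractGraph G b v i).Adj (contractMap b v i a) (contractMap b v i c) := by
  by_cases ha : a ∈ v '' Set.Iic i <;> by_cases hc : c ∈ v '' Set.Iic i
  · exact absurd (by rw [contractMap_of_mem ha, contractMap_of_mem hc]) hne
  · obtain ⟨j, hj, rfl⟩ := ha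
    rw [contractMap_of_mem ⟨j, hj, rfl⟩]
    exact contractGraph_adj_contractBase hb hc hj hac hcut
  · obtain ⟨j, hj, rfl⟩ := hc
    rw [contractMap_of_mem ⟨j, hj, rfl⟩]
    refine (contractGraph_adj_contractBase hb ha hj hac.symm fun h => ?_).symm
    rw [Sym2.eq_swap]
    exact hcut h
  · have hab : a ≠ b := fun h => ha (h ▸ hb)
    have hcb : c ≠ b := fun h => hc (h ▸ hb)
    rw [contractGraph, SimpleGraph.fromRel_adj, coe_contractMap_of_notMem ha,
      coe_contractMap_of_notMem hc]
    exact ⟨hne, Or.inl (Or.inl ⟨hab, hcb, hac⟩)⟩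

theorem connected_induce_image_contractMap (hb : b ∈ v '' Set.Iic i) {D : Finset V}
    (hD : (G.induce (D : Set V)).Connected)
    (hcut : ∀ h : (i : ℕ) + 1 < s, ¬(v i ∈ D ∧ v ⟨i + 1, h⟩ ∈ D)) :
    ((contractGraph G b v i).induce (D.image (contractMap b v i) : Set _)).Connected := by
  refine hD.of_map_adj (fun x => ⟨contractMap b v i x, mem_image_of_mem _ x.2⟩)
    (fun x y hxy => ?_) fun ⟨_, hy⟩ => ?_
  · by_cases hne : contractMap b v i x = contractMap b v i y
    · exact SimpleGraph.reachable_induce_of_coe_eq hne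
    refine SimpleGraph.Adj.reachable (SimpleGraph.induce_adj.mpr ?_)
    refine contractGraph_adj_contractMap hb (SimpleGraph.induce_adj.mp hxy) hne fun h hcut' => ?_
    rcases Sym2.eq_iff.mp hcut' with ⟨hx, hy⟩ | ⟨hx, hy⟩
    · exact hcut h ⟨hx ▸ x.2, hy ▸ y.2⟩
    · exact hcut h ⟨hy ▸ y.2, hx ▸ x.2⟩
  · obtain ⟨x, hx, rfl⟩ := mem_image.mp hy
    exact ⟨⟨x, hx⟩, SimpleGraph.Reachable.refl _⟩


theorem reachable_induce_of_path
    (hpath : ∀ j (h : j + 1 < s), G.Adj (v ⟨j, Nat.lt_of_succ_lt h⟩) (v ⟨j + 1, h⟩))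
    (h0 : 0 < s) {T : Set V} (hT : v '' Set.Iic i ⊆ T) (j : Fin s) (hj : j ≤ i) :
    (G.induce T).Reachable ⟨v ⟨0, h0⟩, hT ⟨_, Nat.zero_le (i : ℕ), rfl⟩⟩
      ⟨v j, hT ⟨j, hj, rfl⟩⟩ := by
  obtain ⟨n, hn⟩ := j
  induction n with
  | zero => rfl
  | succ n ih =>
    exact (ih (Nat.lt_of_succ_lt hn) (Fin.le_def.mpr (Nat.le_of_succ_le (Fin.le_def.mp hj)))).trans
      (SimpleGraph.Adj.reachable (hpath n hn))

theorem connected_induce_preimage_contractMap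
    (hpath : ∀ j (h : j + 1 < s), G.Adj (v ⟨j, Nat.lt_of_succ_lt h⟩) (v ⟨j + 1, h⟩))
    (h0 : 0 < s) (hv0 : v ⟨0, h0⟩ = b) {D : Finset (ContractedVerts b v i)}
    (hD : ((contractGraph G b v i).induce (D : Set _)).Connected) :
    (G.induce {x | contractMap b v i x ∈ D}).Connected := by
  set T := {x | contractMap b v i x ∈ D}
  have hpre : contractBase b v i ∈ D → v '' Set.Iic i ⊆ T := fun hbD x hx => by
    simpa [T, contractMap_of_mem hx] using hbD
  have hmem (y : ContractedVerts b v i) (hy : y ∈ (D : Set _)) : (y : V) ∈ T := by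
    simpa [T, contractMap_coe] using hy
  have hstep (y y' : (D : Set (ContractedVerts b v i)))
      (h : (y : V) ≠ b ∧ (y' : V) ≠ b ∧ G.Adj y y' ∨
        (y : V) = b ∧ ∃ j ≤ i, G.Adj (v j) y' ∧
          ¬(j = i ∧ ∃ h : (i : ℕ) + 1 < s, (y' : V) = v ⟨i + 1, h⟩)) :
      (G.induce T).Reachable ⟨y, hmem y y.2⟩ ⟨y', hmem y' y'.2⟩ := by
    rcases h with ⟨-, -, hadj⟩ | ⟨hy, j, hj, hadj, -⟩
    · exact SimpleGraph.Adj.reachable (SimpleGraph.induce_adj.mpr hadj :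
        (G.induce T).Adj ⟨y, hmem y y.2⟩ ⟨y', hmem y' y'.2⟩)
    · have hbD : contractBase b v i ∈ D := (Subtype.ext hy : y.1 = contractBase b v i) ▸ y.2
      have hvj :
          (G.induce T).Reachable ⟨v j, hpre hbD ⟨j, hj, rfl⟩⟩ ⟨y', hmem y' y'.2⟩ :=
        (SimpleGraph.induce_adj.mpr hadj).reachable
      have hyv0 : (G.induce T).Reachable ⟨y, hmem y y.2⟩
          ⟨v ⟨0, h0⟩, hpre hbD ⟨_, Nat.zero_le (i : ℕ), rfl⟩⟩ :=
        SimpleGraph.reachable_induce_of_coe_eq (hy.trans hv0.symm)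
      exact hyv0.trans ((reachable_induce_of_path hpath h0 (hpre hbD) j hj).trans hvj)
  refine hD.of_map_adj (fun y => ⟨y, hmem y y.2⟩) (fun y y' hyy' => ?_) fun t => ?_
  · rw [SimpleGraph.induce_adj, contractGraph, SimpleGraph.fromRel_adj] at hyy'
    exact hyy'.2.elim (hstep y y') fun h => (hstep y' y h).symm
  · by_cases ht : (t : V) ∈ v '' Set.Iic i
    · obtain ⟨j, hj, hjt⟩ := ht
      have hbD : contractBase b v i ∈ D := contractMap_of_mem ⟨j, hj, hjt⟩ ▸ t.2
      refine ⟨⟨contractBase b v i, hbD⟩, ?_⟩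
      exact (SimpleGraph.reachable_induce_of_coe_eq hjt.symm).trans
        ((reachable_induce_of_path hpath h0 (hpre hbD) j hj).symm.trans
          (SimpleGraph.reachable_induce_of_coe_eq hv0))
    · exact ⟨⟨contractMap b v i t, t.2⟩,
        SimpleGraph.reachable_induce_of_coe_eq (coe_contractMap_of_notMem ht).symm⟩

end Contraction

section Transfer

variable {V C : Type*} [Fintype V] {G : SimpleGraph V} {w : V → C → ℕ} {p : C} {k : ℕ}
  {b : V} {s : ℕ} {v : Fin s → V}

theorem exists_contracted_of_compatible {i : Fin s} (hb : b ∈ v '' Set.Iic i)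
    (hinj : Function.Injective v) {P : Finset (Finset V)} (hP : IsDistrictPartition G k P)
    (hsat : SatisfyingW w p P)
    (hresp : ∀ D ∈ P, v '' Set.Iic i ⊆ D ∨ Disjoint (v '' Set.Iic i) D)
    (hcut : ∀ D ∈ P, ∀ h : (i : ℕ) + 1 < s, ¬(v i ∈ D ∧ v ⟨i + 1, h⟩ ∈ D)) :
    ∃ P' : Finset (Finset (ContractedVerts b v i)),
      IsDistrictPartition (contractGraph G b v i) k P' ∧
        SatisfyingW (contractWeight w b v i) p P' := by
  have hsatur D (hD : D ∈ P) := preimage_image_contractMap_subset hb (hresp D hD)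
  obtain ⟨hinjOn, hP'⟩ := hP.image_image contractMap_surjective hsatur fun D hD =>
    connected_induce_image_contractMap hb (hP.2.2.2.2 D hD) (hcut D hD)
  exact ⟨_, hP', hsat.image _ hinjOn fun D hD =>
    votesW_image_of_saturated (contractWeight_eq_sum_fiber hb hinj w) (hsatur D hD)⟩

theorem exists_expanded_of_contracted
    (hpath : ∀ j (h : j + 1 < s), G.Adj (v ⟨j, Nat.lt_of_succ_lt h⟩) (v ⟨j + 1, h⟩))
    (h0 : 0 < s) (hv0 : v ⟨0, h0⟩ = b) (hinj : Function.Injective v) {i : Fin s}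
    {P' : Finset (Finset (ContractedVerts b v i))}
    (hP' : IsDistrictPartition (contractGraph G b v i) k P')
    (hsat : SatisfyingW (contractWeight w b v i) p P') :
    ∃ P : Finset (Finset V), IsDistrictPartition G k P ∧ SatisfyingW w p P := by
  have hb : b ∈ v '' Set.Iic i := ⟨⟨0, h0⟩, Nat.zero_le (i : ℕ), hv0⟩
  obtain ⟨hinjOn, hP⟩ := hP'.image_preimage contractMap_surjective fun D hD =>
    connected_induce_preimage_contractMap hpath h0 hv0 (hP'.2.2.2.2 D hD)
  exact ⟨_, hP, hsat.image _ hinjOn fun D _ =>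
    votesW_preimage (contractWeight_eq_sum_fiber hb hinj w) D⟩

end Transfer

/-- branching correctness in Theorem 3.  Let `(G, C, w, p, k)` be a
Weighted Gerrymandering instance where `G` is a finite tree, `b` a branch vertex of `G`, and
`S = v_1, …, v_s` a segment of `G` with `v_1 = b`.  For `i ∈ [s]`, let `G'_i` be obtained from
`G` by deleting the edge `v_i v_{i+1}` (when `i < s`) and contracting `v_1, …, v_i` into the
single vertex `b`, with weight vector `w'(b) = ∑_{j=1}^{i} w(v_j)` and all other weights
unchanged.  Then `G` admits a satisfying district-partition into `k` districts iff some `G'_i`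
does. -/
theorem branching_correctness {V C : Type*} [Fintype V]
    (G : SimpleGraph V)
    (w : V → C → ℕ) (p : C) (k : ℕ)
    (b : V)
    (s : ℕ) (hs : 2 ≤ s) (v : Fin s → V)
    (hv1 : v ⟨0, by omega⟩ = b)
    (hinj : Function.Injective v)
    (hpath : ∀ (j : ℕ) (h : j + 1 < s), G.Adj (v ⟨j, by omega⟩) (v ⟨j + 1, h⟩)) :
    (∃ P : Finset (Finset V), IsDistrictPartition G k P ∧ SatisfyingW w p P) ↔
      (∃ i : Fin s, ∃ P' : Finset (Finset (ContractedVerts b v i)),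
        IsDistrictPartition (contractGraph G b v i) k P' ∧
          SatisfyingW (contractWeight w b v i) p P') := by
  have h0 : 0 < s := by omega
  refine ⟨fun ⟨P, hP, hsat⟩ => ?_, fun ⟨i, P', hP', hsat⟩ =>
    exists_expanded_of_contracted hpath h0 hv1 hinj hP' hsat⟩
  obtain ⟨D₀, hD₀, hbD₀⟩ := hP.2.2.2.1 b
  obtain ⟨i, hsub, hnext⟩ :=
    exists_prefix_subset_and_succ_notMem (D := (D₀ : Set V)) h0 (hv1 ▸ hbD₀)
  have hdisj : ∀ D ∈ P, D ≠ D₀ → Disjoint (v '' Set.Iic i) D := fun D hD hne =>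
    (Finset.disjoint_coe.mpr (hP.2.2.1 D₀ hD₀ D hD hne.symm)).mono_left hsub
  refine ⟨i, exists_contracted_of_compatible ⟨⟨0, h0⟩, Nat.zero_le (i : ℕ), hv1⟩ hinj hP
    hsat (fun D hD => ?_) fun D hD h ⟨hi, hi1⟩ => ?_⟩
  · rcases eq_or_ne D D₀ with rfl | hne
    exacts [Or.inl hsub, Or.inr (hdisj D hD hne)]
  · rcases eq_or_ne D D₀ with rfl | hne
    exacts [hnext h hi1, Set.disjoint_left.mp (hdisj D hD hne) ⟨i, Set.self_mem_Iic, rfl⟩ hi]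
end

section
/- Let G be a finite tree with summed branch degree d, let b be a branch vertex of G, and let S = v_1,…,v_s be a segment of G with v_1 = b. For any i ∈ [s], the graph G'_i obtained from G by deleting the edge v_i v_{i+1} when i < s and contracting v_1,…,v_i into the single vertex b has summed branch degree at most d − 1. -/
attribute [local instance] Classical.propDecidable

/-- The *summed branch degree* of a graph: the sum of `deg(x)` over all branch vertices `x`
(vertices of degree at least 3). -/
noncomputable def sumBranchDeg {V : Type*} [Fintype V] (G : SimpleGraph V) : ℕ :=
  letI : DecidableRel G.Adj := fun _ _ => Classical.propDecidable _
  ∑ x ∈ Finset.univ.filter (fun x => 3 ≤ G.degree x), G.degree x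

/-!
Contracting `v_0, …, v_i` into `b` raises no other degree: a surviving vertex trades its
contracted neighbours for the single neighbour `b`. The new `b` inherits only those neighbours
of contracted vertices that lie outside the prefix and are not reached through the deleted edge
`v_i v_{i+1}`. Both neighbours of an internal (degree-2) segment vertex are excluded, so only
`v_0 = b`, minus `v_1`, and, if `i = s - 1`, the end `v_{s-1}`, minus `v_{s-2}`, contribute.
So the new degree of `b` is at most `deg b - 1 + (deg v_{s-1} - 1)`, resp. `deg b - 1`, which is
less than the summed branch degree of the contracted vertices (when `v_{s-1}` is a leaf its term
is `0`).
-/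

open Finset

lemma SimpleGraph.eq_or_eq_of_degree_eq_two {V : Type*} {G : SimpleGraph V} {x a c z : V}
    [Fintype (G.neighborSet x)] (hdeg : G.degree x = 2) (ha : G.Adj x a) (hc : G.Adj x c)
    (hac : a ≠ c) (hz : G.Adj x z) : z = a ∨ z = c := by
  have hpair : ({a, c} : Finset V) = G.neighborFinset x := by
    refine eq_of_subset_of_card_le (fun y hy => ?_) ?_
    · rcases mem_insert.1 hy with rfl | hy
      · exact (G.mem_neighborFinset x _).2 ha
      · exact (G.mem_neighborFinset x _).2 (mem_singleton.1 hy ▸ hc)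
    · rw [card_pair hac, G.card_neighborFinset_eq_degree, hdeg]
  simpa [← hpair] using (G.mem_neighborFinset x z).2 hz

lemma sumBranchDeg_eq_sum {V : Type*} [Fintype V] (G : SimpleGraph V) [DecidableRel G.Adj] :
    sumBranchDeg G = ∑ x with 3 ≤ G.degree x, G.degree x := by
  unfold sumBranchDeg
  congr!

section Contraction

variable {V : Type*} (b : V) {s : ℕ} (v : Fin s → V) (i : Fin s)

noncomputable def contractedPrefix : Finset V := (Iic i).image v

def ContractedVerts.center : ContractedVerts b v i := ⟨b, Or.inl rfl⟩

variable {b v i}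

lemma apply_mem_contractedPrefix {j : Fin s} (hj : j ≤ i) : v j ∈ contractedPrefix v i :=
  mem_image_of_mem v (mem_Iic.2 hj)

lemma ContractedVerts.val_notMem_contractedPrefix {x : ContractedVerts b v i}
    (hx : (x : V) ≠ b) : (x : V) ∉ contractedPrefix v i := by
  simp only [contractedPrefix, mem_image, mem_Iic, not_exists, not_and]
  exact fun j hj hjx => x.2.resolve_left hx j hj hjx.symm

variable {G : SimpleGraph V}

lemma contractGraph_adj_of_ne_center {x z : ContractedVerts b v i} (hx : (x : V) ≠ b)
    (h : (contractGraph G b v i).Adj x z) :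
    ((z : V) ≠ b ∧ G.Adj x z) ∨ ((z : V) = b ∧ ∃ j ≤ i, G.Adj (v j) x) := by
  rcases (SimpleGraph.fromRel_adj _ x z).1 h with
    ⟨-, (⟨-, hz, hxz⟩ | ⟨hxb, -⟩) | (⟨hz, -, hzx⟩ | ⟨hz, j, hj, hjx, -⟩)⟩
  · exact .inl ⟨hz, hxz⟩
  · exact absurd hxb hx
  · exact .inl ⟨hz, hzx.symm⟩
  · exact .inr ⟨hz, j, hj, hjx⟩

lemma contractGraph_center_adj {z : ContractedVerts b v i}
    (h : (contractGraph G b v i).Adj (ContractedVerts.center b v i) z) :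
    (z : V) ∉ contractedPrefix v i ∧ ∃ j ≤ i, G.Adj (v j) z ∧
      ¬(j = i ∧ ∃ h : (i : ℕ) + 1 < s, (z : V) = v ⟨(i : ℕ) + 1, h⟩) := by
  have hzb : (z : V) ≠ b := fun hzb => h.ne (Subtype.ext hzb.symm)
  refine ⟨ContractedVerts.val_notMem_contractedPrefix hzb, ?_⟩
  rcases (SimpleGraph.fromRel_adj _ _ z).1 h with
    ⟨-, (⟨hbb, -⟩ | ⟨-, hj⟩) | (⟨-, hbb, -⟩ | ⟨hz, -⟩)⟩
  · exact absurd rfl hbb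
  · exact hj
  · exact absurd rfl hbb
  · exact absurd hz hzb

variable [Fintype V] [DecidableRel G.Adj] [Fintype (ContractedVerts b v i)]

lemma contractGraph_degree_le {x : ContractedVerts b v i} (hx : (x : V) ≠ b) :
    (contractGraph G b v i).degree x ≤ G.degree x := by
  set K := contractedPrefix v i
  set N := G.neighborFinset x
  have hsub : ((contractGraph G b v i).neighborFinset x).map (Function.Embedding.subtype _) ⊆
      (N \ K) ∪ (N ∩ K).image (fun _ => b) := by
    intro z hz
    obtain ⟨z, hxz, rfl⟩ := mem_map.1 hz
    rcases contractGraph_adj_of_ne_center hx ((SimpleGraph.mem_neighborFinset _ _ _).1 hxz) with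
      ⟨hzb, hadj⟩ | ⟨hzb, j, hj, hjx⟩
    · exact mem_union_left _ (mem_sdiff.2 ⟨(G.mem_neighborFinset _ _).2 hadj,
        ContractedVerts.val_notMem_contractedPrefix hzb⟩)
    · have hjN : v j ∈ N := (G.mem_neighborFinset _ _).2 hjx.symm
      exact mem_union_right _
        (mem_image.2 ⟨v j, mem_inter.2 ⟨hjN, apply_mem_contractedPrefix hj⟩, hzb.symm⟩)
  calc (contractGraph G b v i).degree x
      = #(((contractGraph G b v i).neighborFinset x).map (Function.Embedding.subtype _)) := by
        rw [card_map, SimpleGraph.card_neighborFinset_eq_degree]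
    _ ≤ #(N \ K) + #((N ∩ K).image fun _ => b) := (card_le_card hsub).trans (card_union_le _ _)
    _ ≤ #(N \ K) + #(N ∩ K) := by grw [card_image_le]
    _ = G.degree x := by
        rw [card_sdiff_add_card_inter, SimpleGraph.card_neighborFinset_eq_degree]

lemma sumBranchDeg_contractGraph_add_le :
    sumBranchDeg (contractGraph G b v i) +
        ∑ x ∈ contractedPrefix v i with 3 ≤ G.degree x, G.degree x ≤
      (contractGraph G b v i).degree (ContractedVerts.center b v i) + sumBranchDeg G := by
  set Gc := contractGraph G b v i
  set c := ContractedVerts.center b v i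
  set K := contractedPrefix v i
  set B : Finset V := {x | 3 ≤ G.degree x}
  set B' : Finset (ContractedVerts b v i) := {x | 3 ≤ Gc.degree x}
  have hcenter : ∑ x ∈ B', Gc.degree x ≤ Gc.degree c + ∑ x ∈ B'.erase c, Gc.degree x :=
    calc ∑ x ∈ B', Gc.degree x ≤ ∑ x ∈ insert c B', Gc.degree x :=
          sum_le_sum_of_subset (subset_insert _ _)
      _ = _ := by rw [← add_sum_erase _ _ (mem_insert_self c B'), erase_insert_eq_erase]
  have hrest : ∑ x ∈ B'.erase c, Gc.degree x ≤ ∑ x ∈ B \ K, G.degree x := by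
    have hne : ∀ x ∈ B'.erase c, (x : V) ≠ b :=
      fun x hx hxb => ne_of_mem_erase hx (Subtype.ext hxb)
    calc ∑ x ∈ B'.erase c, Gc.degree x ≤ ∑ x ∈ B'.erase c, G.degree x :=
          sum_le_sum fun x hx => contractGraph_degree_le (hne x hx)
      _ = ∑ y ∈ (B'.erase c).map (Function.Embedding.subtype _), G.degree y := by
          rw [sum_map]; rfl
      _ ≤ _ := by
          refine sum_le_sum_of_subset fun y hy => ?_
          obtain ⟨x, hx, rfl⟩ := mem_map.1 hy
          have hxB' : 3 ≤ Gc.degree x := (mem_filter.1 (mem_of_mem_erase hx)).2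
          simp only [B, mem_sdiff, mem_filter, mem_univ, true_and]
          exact ⟨hxB'.trans (contractGraph_degree_le (hne x hx)),
            ContractedVerts.val_notMem_contractedPrefix (hne x hx)⟩
  have hsplit := sum_inter_add_sum_sdiff B K (G.degree ·)
  rw [filter_inter, univ_inter] at hsplit
  rw [sumBranchDeg_eq_sum, sumBranchDeg_eq_sum, ← hsplit]
  change ∑ x ∈ B', Gc.degree x + _ ≤ _
  omega

end Contraction

section Segment

variable {V : Type*} [Fintype V] {G : SimpleGraph V} [DecidableRel G.Adj] {b : V} {s : ℕ}
  {v : Fin s → V} {i : Fin s} [Fintype (ContractedVerts b v i)]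
  (hinj : Function.Injective v)
  (hpath : ∀ (j : ℕ) (h : j + 1 < s), G.Adj (v ⟨j, by omega⟩) (v ⟨j + 1, h⟩))
  (hinternal : ∀ (j : ℕ) (h : j < s), 0 < j → j < s - 1 → G.degree (v ⟨j, h⟩) = 2)
include hinj hpath hinternal

lemma eq_zero_or_eq_last_of_adj_of_notMem_contractedPrefix {j : Fin s} {z : V} (hj : j ≤ i)
    (hadj : G.Adj (v j) z) (hz : z ∉ contractedPrefix v i)
    (hexit : ¬(j = i ∧ ∃ h : (i : ℕ) + 1 < s, z = v ⟨(i : ℕ) + 1, h⟩)) :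
    (j : ℕ) = 0 ∨ (j : ℕ) = s - 1 := by
  by_contra! hmid
  obtain ⟨j, hjs⟩ := j
  simp only at hmid
  obtain ⟨k, rfl⟩ : ∃ k, j = k + 1 := ⟨j - 1, by omega⟩
  rcases G.eq_or_eq_of_degree_eq_two (hinternal (k + 1) _ (by omega) (by omega)) (hpath k _).symm
      (hpath (k + 1) (by omega)) (fun h => absurd (Fin.mk.inj_iff.1 (hinj h)) (by omega)) hadj
    with rfl | rfl
  · exact hz (apply_mem_contractedPrefix (le_trans (Fin.mk_le_mk.2 (by omega)) hj))
  · by_cases hki : k + 2 ≤ (i : ℕ)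
    · exact hz (apply_mem_contractedPrefix (Fin.mk_le_mk.2 hki))
    · have hi : (i : ℕ) = k + 1 := by have : k + 1 ≤ (i : ℕ) := Fin.le_def.1 hj; omega
      exact hexit ⟨Fin.ext hi.symm, by omega, by simp [hi]⟩

lemma contractGraph_neighborFinset_center_subset (hs : 2 ≤ s) (hv1 : v ⟨0, by omega⟩ = b) :
    ((contractGraph G b v i).neighborFinset (ContractedVerts.center b v i)).map
        (Function.Embedding.subtype _) ⊆
      (G.neighborFinset b).erase (v ⟨1, by omega⟩) ∪
        if (i : ℕ) = s - 1 then
          (G.neighborFinset (v ⟨s - 1, by omega⟩)).erase (v ⟨s - 2, by omega⟩)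
        else ∅ := by
  intro z hz
  obtain ⟨z, hcz, rfl⟩ := mem_map.1 hz
  rw [Function.Embedding.coe_subtype]
  obtain ⟨hzK, j, hj, hadj, hexit⟩ :=
    contractGraph_center_adj ((SimpleGraph.mem_neighborFinset _ _ _).1 hcz)
  rcases eq_zero_or_eq_last_of_adj_of_notMem_contractedPrefix hinj hpath hinternal hj hadj hzK
      hexit with hj0 | hjl <;>
    obtain ⟨j, hjs⟩ := j
  · subst hj0
    refine mem_union_left _
      (mem_erase.2 ⟨fun hz1 => ?_, (G.mem_neighborFinset _ _).2 (hv1 ▸ hadj)⟩)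
    by_cases hi : (i : ℕ) = 0
    · exact hexit ⟨Fin.ext hi.symm, by omega, by simp [hz1, hi]⟩
    · exact hzK (hz1 ▸ apply_mem_contractedPrefix (Fin.le_def.2 (by simp; omega)))
  · subst hjl
    have hi : (i : ℕ) = s - 1 := le_antisymm (by omega) (Fin.le_def.1 hj)
    rw [if_pos hi]
    refine mem_union_right _ (mem_erase.2 ⟨fun hz2 => hzK (hz2 ▸ apply_mem_contractedPrefix ?_),
      (G.mem_neighborFinset _ _).2 hadj⟩)
    exact Fin.le_def.2 (by simp; omega)

lemma contractGraph_degree_center_add_two_le (hs : 2 ≤ s) (hv1 : v ⟨0, by omega⟩ = b) :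
    (contractGraph G b v i).degree (ContractedVerts.center b v i) + 2 ≤
      G.degree b + if (i : ℕ) = s - 1 then G.degree (v ⟨s - 1, by omega⟩) else 1 := by
  have hcard := card_le_card
    (contractGraph_neighborFinset_center_subset (i := i) hinj hpath hinternal hs hv1)
  rw [card_map, SimpleGraph.card_neighborFinset_eq_degree] at hcard
  have hfirst : #((G.neighborFinset b).erase (v ⟨1, by omega⟩)) + 1 = G.degree b := by
    rw [card_erase_add_one ((G.mem_neighborFinset _ _).2 (hv1 ▸ hpath 0 (by omega))),
      SimpleGraph.card_neighborFinset_eq_degree]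
  split_ifs at hcard ⊢ with hi
  · have hprev : v ⟨s - 2, by omega⟩ ∈ G.neighborFinset (v ⟨s - 1, by omega⟩) := by
      rw [SimpleGraph.mem_neighborFinset]
      convert (hpath (s - 2) (by omega)).symm using 3
      omega
    have hlast :
        #((G.neighborFinset (v ⟨s - 1, by omega⟩)).erase (v ⟨s - 2, by omega⟩)) + 1 =
          G.degree (v ⟨s - 1, by omega⟩) := by
      rw [card_erase_add_one hprev, SimpleGraph.card_neighborFinset_eq_degree]
    have := hcard.trans (card_union_le _ _)
    omega
  · rw [union_empty] at hcard
    omega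

end Segment

/-- measure decrease in Theorem 3.  Let `G` be a finite tree with summed
branch degree `d`, `b` a branch vertex of `G`, and `S = v_1, …, v_s` a segment of `G` with
`v_1 = b`.  For any `i ∈ [s]`, the graph `G'_i` obtained from `G` by deleting the edge
`v_i v_{i+1}` (when `i < s`) and contracting `v_1, …, v_i` into the single vertex `b` has
summed branch degree at most `d - 1`. -/
theorem contraction_decreases_summed_branch_degree {V : Type*} [Fintype V] [DecidableEq V]
    (G : SimpleGraph V) [DecidableRel G.Adj]
    (b : V) (hb : 3 ≤ G.degree b)
    (s : ℕ) (hs : 2 ≤ s) (v : Fin s → V)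
    (hv1 : v ⟨0, by omega⟩ = b)
    (hinj : Function.Injective v)
    (hpath : ∀ (j : ℕ) (h : j + 1 < s), G.Adj (v ⟨j, by omega⟩) (v ⟨j + 1, h⟩))
    (hend : G.degree (v ⟨s - 1, by omega⟩) = 1 ∨ 3 ≤ G.degree (v ⟨s - 1, by omega⟩))
    (hinternal : ∀ (j : ℕ) (h : j < s), 0 < j → j < s - 1 → G.degree (v ⟨j, h⟩) = 2)
    (i : Fin s) :
    sumBranchDeg (contractGraph G b v i) ≤ sumBranchDeg G - 1 := by
  have hsum := sumBranchDeg_contractGraph_add_le (G := G) (b := b) (v := v) (i := i)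
  have hcenter := contractGraph_degree_center_add_two_le (i := i) hinj hpath hinternal hs hv1
  have hbK : b ∈ contractedPrefix v i :=
    hv1 ▸ apply_mem_contractedPrefix (Fin.le_def.2 (Nat.zero_le _))
  have hbA : G.degree b ≤ ∑ x ∈ contractedPrefix v i with 3 ≤ G.degree x, G.degree x :=
    single_le_sum (f := (G.degree ·)) (fun _ _ => Nat.zero_le _) (mem_filter.2 ⟨hbK, hb⟩)
  split_ifs at hcenter with hi
  · rcases hend with hleaf | hbranch
    · omega
    · have hlastK : v ⟨s - 1, by omega⟩ ∈ contractedPrefix v i :=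
        apply_mem_contractedPrefix (Fin.le_def.2 hi.ge)
      have hne : b ≠ v ⟨s - 1, by omega⟩ := hv1 ▸ hinj.ne (by simp; omega)
      have := add_le_sum (f := (G.degree ·))
        (s := {x ∈ contractedPrefix v i | 3 ≤ G.degree x}) (fun _ _ => Nat.zero_le _)
        (mem_filter.2 ⟨hbK, hb⟩) (mem_filter.2 ⟨hlastK, hbranch⟩) hne
      omega
  · omega
end
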